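/- arXiv:1908.11802 — 2 statements merged into one kernel-verified Lean document; each statement's English description precedes it below -/
import Mathlib

section
/- In any tree T of order n ≥ 3, the sum of normalities Norm(T) = Σ_{v∈V(T)} norm(v) satisfies Norm(T) ≥ 1, with equality if and only if T is the star S_n. -/
open Finset

variable {V : Type*}

/-- Eccentricity: the maximum distance from `v` to any vertex. -/
noncomputable def ecc (G : SimpleGraph V) [Fintype V] (v : V) : ℕ :=
  Finset.univ.sup fun u => G.dist v u

/-- Diameter: the maximum eccentricity. -/
noncomputable def gdiam (G : SimpleGraph V) [Fintype V] : ℕ :=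
  Finset.univ.sup fun v => ecc G v

/-- A vertex is peripheral if its eccentricity equals the diameter. -/
noncomputable def peripheral (G : SimpleGraph V) [Fintype V] (v : V) : Prop :=
  ecc G v = gdiam G

/-- Normality: the minimum distance from `v` to a peripheral vertex. -/
noncomputable def gnorm (G : SimpleGraph V) [Fintype V] (v : V) : ℕ :=
  sInf {n | ∃ u, peripheral G u ∧ G.dist v u = n}

/-- The sum of normalities. -/
noncomputable def NormSum (G : SimpleGraph V) [Fintype V] : ℕ :=
  ∑ v, gnorm G v

/-- λ(v) = ecc(v) − norm(v). -/
noncomputable def lam (G : SimpleGraph V) [Fintype V] (v : V) : ℕ :=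
  ecc G v - gnorm G v

/-- Λ(T) = Σ_v λ(v). -/
noncomputable def LamSum (G : SimpleGraph V) [Fintype V] : ℕ :=
  ∑ v, lam G v

/-- `G` is a star: there is a center adjacent to exactly the other vertices,
with no other edges. -/
def IsStar (G : SimpleGraph V) : Prop :=
  ∃ c : V, ∀ u v : V, G.Adj u v ↔ (u = c ∧ v ≠ c) ∨ (v = c ∧ u ≠ c)

/-! A vertex of a tree with two neighbours is never peripheral, and a connected graph on at least
three vertices has such a vertex, so some normality is positive. If the normalities sum to 1,
every other vertex is peripheral, hence a leaf, and the tree is a star around it; conversely, in a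
star the leaves are peripheral and the centre is adjacent to them. -/

open SimpleGraph

section
variable {G : SimpleGraph V}

lemma exists_ne_nontrivial_neighborSet_of_not_adj {x y : V} (hr : G.Reachable x y)
    (hne : x ≠ y) (hxy : ¬G.Adj x y) : ∃ w ≠ x, (G.neighborSet w).Nontrivial := by
  obtain ⟨p, hp, hlen⟩ := hr.exists_path_of_dist
  have h0 : G.dist x y ≠ 0 := dist_ne_zero_iff_ne_and_reachable.mpr ⟨hne, hr⟩
  have h1 : G.dist x y ≠ 1 := fun h => hxy (dist_eq_one_iff_adj.mp h)
  have hinj : ∀ i j, i ≤ p.length → j ≤ p.length → p.getVert i = p.getVert j → i = j :=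
    fun i j hi hj h => hp.getVert_injOn hi hj h
  refine ⟨p.getVert 1, fun h => ?_, p.getVert 0, ?_, p.getVert 2, ?_, fun h => ?_⟩
  · exact absurd (hinj 1 0 (by omega) (by omega) (by simpa using h)) one_ne_zero
  · exact (p.adj_getVert_succ (by omega)).symm
  · exact p.adj_getVert_succ (by omega)
  · exact absurd (hinj 0 2 (by omega) (by omega) h) (by omega)

lemma exists_nontrivial_neighborSet [Fintype V] (hconn : G.Preconnected)
    (hn : 2 < Fintype.card V) : ∃ w, (G.neighborSet w).Nontrivial := by
  obtain ⟨x, y, z, hxy, hxz, hyz⟩ := Fintype.two_lt_card_iff.mp hn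
  by_cases hxy' : G.Adj x y
  · by_cases hxz' : G.Adj x z
    · exact ⟨x, y, hxy', z, hxz', hyz⟩
    · obtain ⟨w, -, hw⟩ := exists_ne_nontrivial_neighborSet_of_not_adj (hconn x z) hxz hxz'
      exact ⟨w, hw⟩
  · obtain ⟨w, -, hw⟩ := exists_ne_nontrivial_neighborSet_of_not_adj (hconn x y) hxy hxy'
    exact ⟨w, hw⟩

lemma SimpleGraph.IsTree.getVert_one_eq_of_dist_le (hT : G.IsTree) {v a u : V}
    {p : G.Walk v u} (hp : p.IsPath) (hva : G.Adj v a) (hle : G.dist a u ≤ G.dist v u) :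
    p.getVert 1 = a := by
  obtain ⟨q, -, hql⟩ := (hT.connected a u).exists_path_of_dist
  have hlen : (Walk.cons hva q).length = G.dist v u := by
    have := hT.dist_eq_dist_add_one_of_adj u hva
    rw [dist_comm (u := u), dist_comm (u := u)] at this
    simp only [Walk.length_cons, hql]
    omega
  rw [(hT.existsUnique_path v u).unique hp (Walk.isPath_of_length_eq_dist _ hlen)]
  simp

section Periphery
variable [Fintype V]

lemma dist_le_ecc (v u : V) : G.dist v u ≤ ecc G v := le_sup (mem_univ u)

lemma ecc_le_gdiam (v : V) : ecc G v ≤ gdiam G := le_sup (mem_univ v)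

lemma exists_dist_eq_ecc [Nonempty V] (G : SimpleGraph V) (v : V) :
    ∃ u, G.dist v u = ecc G v := by
  obtain ⟨u, -, hu⟩ := exists_mem_eq_sup univ univ_nonempty (fun u => G.dist v u)
  exact ⟨u, hu.symm⟩

lemma exists_peripheral [Nonempty V] (G : SimpleGraph V) : ∃ v, peripheral G v := by
  obtain ⟨v, -, hv⟩ := exists_mem_eq_sup univ univ_nonempty (fun v => ecc G v)
  exact ⟨v, hv.symm⟩

lemma gnorm_le_dist {u : V} (hu : peripheral G u) (v : V) : gnorm G v ≤ G.dist v u :=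
  Nat.sInf_le ⟨u, hu, rfl⟩

lemma gnorm_eq_zero_iff (hconn : G.Connected) {v : V} : gnorm G v = 0 ↔ peripheral G v := by
  refine ⟨fun h => ?_, fun hv => by simpa using gnorm_le_dist hv v⟩
  have : Nonempty V := ⟨v⟩
  obtain ⟨w, hw⟩ := exists_peripheral G
  obtain ⟨u, hu, hvu⟩ := Nat.sInf_mem (s := {n | ∃ u, peripheral G u ∧ G.dist v u = n})
    ⟨_, w, hw, rfl⟩
  rwa [hconn.dist_eq_zero_iff.mp (hvu.trans h)]

/-- The path from `v` to a farthest vertex leaves through only one neighbour, so stepping to the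
other neighbour increases that distance beyond the eccentricity of `v`. -/
lemma not_peripheral_of_nontrivial_neighborSet (hT : G.IsTree) {v : V}
    (h : (G.neighborSet v).Nontrivial) : ¬peripheral G v := by
  obtain ⟨a, ha, b, hb, hab⟩ := h
  intro hv
  have : Nonempty V := ⟨v⟩
  obtain ⟨u, hu⟩ := exists_dist_eq_ecc G v
  obtain ⟨p, hp⟩ := (hT.connected v u).exists_isPath
  have hfar : ∀ x, G.dist x u ≤ G.dist v u := fun x =>
    (dist_le_ecc x u).trans ((ecc_le_gdiam x).trans (hu.trans hv).ge)
  exact hab ((hT.getVert_one_eq_of_dist_le hp ha (hfar a)).symm.trans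
    (hT.getVert_one_eq_of_dist_le hp hb (hfar b)))

lemma isStar_of_forall_ne_peripheral (hT : G.IsTree) {m : V}
    (hper : ∀ v, v ≠ m → peripheral G v) : IsStar G := by
  have hleaf : ∀ v, v ≠ m → ¬(G.neighborSet v).Nontrivial := fun v hv h =>
    not_peripheral_of_nontrivial_neighborSet hT h (hper v hv)
  have hadj : ∀ u, u ≠ m → G.Adj m u := fun u hu => by
    by_contra h
    obtain ⟨w, hwm, hw⟩ :=
      exists_ne_nontrivial_neighborSet_of_not_adj (hT.connected m u) hu.symm h
    exact hleaf w hwm hw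
  refine ⟨m, fun u v => ⟨fun huv => ?_, ?_⟩⟩
  · rcases eq_or_ne u m with rfl | hu
    · exact Or.inl ⟨rfl, (G.ne_of_adj huv).symm⟩
    rcases eq_or_ne v m with rfl | hv
    · exact Or.inr ⟨rfl, hu⟩
    exact (hleaf u hu ⟨v, huv, m, (hadj u hu).symm, hv⟩).elim
  · rintro (⟨rfl, hv⟩ | ⟨rfl, hu⟩)
    · exact hadj v hv
    · exact (hadj u hu).symm

end Periphery

lemma dist_le_two_of_star {c : V} (hconn : G.Connected)
    (hc : ∀ u v : V, G.Adj u v ↔ (u = c ∧ v ≠ c) ∨ (v = c ∧ u ≠ c)) (x y : V) :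
    G.dist x y ≤ 2 := by
  have hxc : ∀ x, G.dist c x ≤ 1 := fun x => by
    rcases eq_or_ne x c with rfl | h
    · simp
    · exact (dist_eq_one_iff_adj.mpr ((hc c x).mpr (Or.inl ⟨rfl, h⟩))).le
  calc G.dist x y ≤ G.dist x c + G.dist c y := hconn.dist_triangle
    _ ≤ 2 := by rw [dist_comm]; linarith [hxc x, hxc y]

lemma peripheral_of_star [Fintype V] {c : V} (hconn : G.Connected)
    (hn : 3 ≤ Fintype.card V)
    (hc : ∀ u v : V, G.Adj u v ↔ (u = c ∧ v ≠ c) ∨ (v = c ∧ u ≠ c)) {u : V} (hu : u ≠ c) :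
    peripheral G u := by
  classical
  obtain ⟨z, -, hz⟩ := exists_mem_notMem_of_card_lt_card
    (s := {u, c}) (t := univ) ((card_le_two).trans_lt hn)
  simp only [mem_insert, mem_singleton, not_or] at hz
  have h0 : G.dist u z ≠ 0 := dist_ne_zero_iff_ne_and_reachable.mpr ⟨Ne.symm hz.1, hconn u z⟩
  have h1 : G.dist u z ≠ 1 := fun h => by
    rcases (hc u z).mp (dist_eq_one_iff_adj.mp h) with h | h
    exacts [hu h.1, hz.2 h.1]
  refine le_antisymm (ecc_le_gdiam u) ?_
  calc gdiam G ≤ 2 :=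
        Finset.sup_le fun x _ => Finset.sup_le fun y _ => dist_le_two_of_star hconn hc x y
    _ ≤ G.dist u z := by omega
    _ ≤ ecc G u := dist_le_ecc u z

lemma normSum_le_one_of_isStar [Fintype V] (hconn : G.Connected) (hn : 3 ≤ Fintype.card V)
    (hS : IsStar G) : NormSum G ≤ 1 := by
  obtain ⟨c, hc⟩ := hS
  obtain ⟨u, hu⟩ := Fintype.exists_ne_of_one_lt_card (by omega) c
  calc NormSum G = gnorm G c := sum_eq_single c
        (fun v _ hv => (gnorm_eq_zero_iff hconn).mpr (peripheral_of_star hconn hn hc hv))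
        (by simp)
    _ ≤ G.dist c u := gnorm_le_dist (peripheral_of_star hconn hn hc hu) c
    _ = 1 := dist_eq_one_iff_adj.mpr ((hc c u).mpr (Or.inl ⟨rfl, hu⟩))

end

theorem stmt_2 [Fintype V] (G : SimpleGraph V) (hT : G.IsTree)
    (hn : 3 ≤ Fintype.card V) :
    1 ≤ NormSum G ∧ (NormSum G = 1 ↔ IsStar G) := by
  classical
  obtain ⟨m, hm⟩ := exists_nontrivial_neighborSet hT.connected.preconnected hn
  have hm_norm : 1 ≤ gnorm G m := Nat.one_le_iff_ne_zero.mpr fun h =>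
    not_peripheral_of_nontrivial_neighborSet hT hm ((gnorm_eq_zero_iff hT.connected).mp h)
  have hpos : 1 ≤ NormSum G := hm_norm.trans (single_le_sum (by simp) (mem_univ m))
  refine ⟨hpos, fun h => isStar_of_forall_ne_peripheral hT (m := m) fun v hv => ?_,
    fun hS => (normSum_le_one_of_isStar hT.connected hn hS).antisymm hpos⟩
  have hpair : gnorm G m + gnorm G v ≤ NormSum G := by
    simpa [NormSum, sum_pair hv.symm] using
      sum_le_sum_of_subset (f := gnorm G) (subset_univ {m, v})
  exact (gnorm_eq_zero_iff hT.connected).mp (by omega)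
end

section
/- For any tree T of order n with diameter d, Λ(T) ≤ (n−d−1)·d + Σ_{i=0}^{d} |d − 2i|, with equality if and only if every vertex not on some fixed longest path is a peripheral vertex (i.e., T is a dumbbell D(n,a,b) with a+b = n−d+1). -/
open Finset

variable {V : Type*}

/-! Fix a diametral path `P` from `x` to `y`, of length `d`. A vertex `v` of `P` is a median of
`x`, `y` and any third vertex, so `ecc v = max (d(x,v), d(v,y))`; since `ecc` is 1-Lipschitz and
peripheral vertices have eccentricity `d`, `norm v ≥ d - ecc v`, while
`norm v ≤ min (d(x,v), d(v,y))` because `x` and `y` are peripheral. Hence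
`λ(v) = |d - 2 d(x,v)|`, and `d(x, ·)` maps `P` bijectively onto `{0, …, d}`. Each of the
other `n - d - 1` vertices has `λ ≤ ecc ≤ d`, with equality exactly when it is peripheral. -/

def lamSumBound (n d : ℕ) : ℕ :=
  (n - d - 1) * d + ∑ i ∈ Finset.range (d + 1), ((d : ℤ) - 2 * i).natAbs

namespace SimpleGraph

variable {G : SimpleGraph V}

section Tree

variable {u v w : V}

lemma IsTree.length_eq_dist (hT : G.IsTree) {p : G.Walk u v} (hp : p.IsPath) :
    p.length = G.dist u v := by
  obtain ⟨q, hq, hql⟩ := hT.connected.exists_path_of_dist u v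
  rw [← hql, (hT.existsUnique_path u v).unique hp hq]

lemma IsTree.dist_add_dist_of_mem_support (hT : G.IsTree) {p : G.Walk u v} (hp : p.IsPath)
    (hw : w ∈ p.support) : G.dist u w + G.dist w v = G.dist u v := by
  classical
  rw [← hT.length_eq_dist (hp.takeUntil hw), ← hT.length_eq_dist (hp.dropUntil hw),
    ← hT.length_eq_dist hp, ← Walk.length_append, p.take_spec hw]

/-- A vertex `w` on the `u`–`v` path is a median: every geodesic from `u` or from `v` to `z`
may be routed through `w`. -/
lemma IsTree.dist_eq_add_or_dist_eq_add (hT : G.IsTree) {p : G.Walk u v} (hp : p.IsPath)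
    (hw : w ∈ p.support) (z : V) :
    G.dist u z = G.dist u w + G.dist w z ∨ G.dist v z = G.dist v w + G.dist w z := by
  classical
  obtain ⟨q, hq, -⟩ := hT.connected.exists_path_of_dist u z
  obtain ⟨r, hr, -⟩ := hT.connected.exists_path_of_dist z v
  have hbypass : (q.append r).bypass = p :=
    (hT.existsUnique_path u v).unique (q.append r).bypass_isPath hp
  have hw' : w ∈ (q.append r).support := Walk.support_bypass_subset_support _ (hbypass ▸ hw)
  rcases (Walk.mem_support_append_iff q r).mp hw' with h | h
  · exact .inl (hT.dist_add_dist_of_mem_support hq h).symm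
  · right
    rw [dist_comm (u := v) (v := z), dist_comm (u := v) (v := w), dist_comm (u := w) (v := z)]
    linarith [hT.dist_add_dist_of_mem_support hr h]

section Support

variable [DecidableEq V] {x y : V} {p : G.Walk x y}

lemma IsTree.injOn_dist_support (hT : G.IsTree) (hp : p.IsPath) :
    Set.InjOn (G.dist x) p.support.toFinset := by
  intro v hv w hw hvw
  rw [Finset.mem_coe, List.mem_toFinset] at hv hw
  have hv' := hT.dist_add_dist_of_mem_support hp hv
  have hw' := hT.dist_add_dist_of_mem_support hp hw
  have hyv : G.dist y v = G.dist v y := dist_comm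
  have hyw : G.dist y w = G.dist w y := dist_comm
  refine hT.connected.dist_eq_zero_iff.mp ?_
  rcases hT.dist_eq_add_or_dist_eq_add hp hv w with h | h <;> omega

lemma IsTree.image_dist_support (hT : G.IsTree) (hp : p.IsPath) :
    p.support.toFinset.image (G.dist x) = Finset.range (G.dist x y + 1) := by
  refine Finset.eq_of_subset_of_card_le (fun i hi => ?_) ?_
  · obtain ⟨v, hv, rfl⟩ := Finset.mem_image.mp hi
    have := hT.dist_add_dist_of_mem_support hp (List.mem_toFinset.mp hv)
    rw [Finset.mem_range]
    omega
  · rw [Finset.card_image_of_injOn (hT.injOn_dist_support hp), Finset.card_range,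
      List.toFinset_card_of_nodup hp.support_nodup, Walk.length_support, hT.length_eq_dist hp]

end Support

end Tree

section Eccentricity

variable [Fintype V]

lemma dist_le_ecc (v u : V) : G.dist v u ≤ ecc G v :=
  Finset.le_sup (Finset.mem_univ u)

lemma ecc_le_gdiam (v : V) : ecc G v ≤ gdiam G :=
  Finset.le_sup (Finset.mem_univ v)

lemma dist_le_gdiam (u v : V) : G.dist u v ≤ gdiam G :=
  (dist_le_ecc u v).trans (ecc_le_gdiam u)

lemma peripheral_of_dist_eq_gdiam {u v : V} (h : G.dist u v = gdiam G) : peripheral G u :=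
  (ecc_le_gdiam u).antisymm (h ▸ dist_le_ecc u v)

lemma exists_dist_eq_gdiam [Nonempty V] : ∃ u v : V, G.dist u v = gdiam G := by
  obtain ⟨u, -, hu⟩ := Finset.exists_mem_eq_sup Finset.univ Finset.univ_nonempty (ecc G)
  obtain ⟨v, -, hv⟩ := Finset.exists_mem_eq_sup Finset.univ Finset.univ_nonempty (G.dist u)
  exact ⟨u, v, hv.symm.trans hu.symm⟩

lemma Connected.exists_isPath_length_eq_gdiam (hG : G.Connected) :
    ∃ (x y : V) (p : G.Walk x y), p.IsPath ∧ p.length = gdiam G := by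
  have := hG.nonempty
  obtain ⟨x, y, hxy⟩ := exists_dist_eq_gdiam (G := G)
  obtain ⟨p, hp, hlen⟩ := hG.exists_path_of_dist x y
  exact ⟨x, y, p, hp, hlen.trans hxy⟩

lemma Connected.ecc_le_dist_add_ecc (hG : G.Connected) (u v : V) :
    ecc G u ≤ G.dist u v + ecc G v :=
  Finset.sup_le fun w _ => hG.dist_triangle.trans (Nat.add_le_add_left (dist_le_ecc v w) _)

lemma gnorm_le_dist {u : V} (hu : peripheral G u) (v : V) : gnorm G v ≤ G.dist v u :=
  Nat.sInf_le ⟨u, hu, rfl⟩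

lemma Connected.gdiam_le_gnorm_add_ecc (hG : G.Connected) (v : V) :
    gdiam G ≤ gnorm G v + ecc G v := by
  have := hG.nonempty
  obtain ⟨u, w, huw⟩ := exists_dist_eq_gdiam (G := G)
  obtain ⟨u', hu', hvu'⟩ : gnorm G v ∈ {n | ∃ u, peripheral G u ∧ G.dist v u = n} :=
    Nat.sInf_mem ⟨_, u, peripheral_of_dist_eq_gdiam huw, rfl⟩
  calc gdiam G = ecc G u' := hu'.symm
    _ ≤ G.dist u' v + ecc G v := hG.ecc_le_dist_add_ecc u' v
    _ = gnorm G v + ecc G v := by rw [dist_comm, hvu']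

lemma lam_le_ecc (v : V) : lam G v ≤ ecc G v := Nat.sub_le _ _

lemma lam_le_gdiam (v : V) : lam G v ≤ gdiam G := (lam_le_ecc v).trans (ecc_le_gdiam v)

lemma lam_eq_gdiam_iff (v : V) : lam G v = gdiam G ↔ peripheral G v := by
  refine ⟨fun h => (ecc_le_gdiam v).antisymm (h ▸ lam_le_ecc v), fun h => ?_⟩
  have hv : gnorm G v = 0 := Nat.le_zero.mp (dist_self (G := G) ▸ gnorm_le_dist h v)
  rw [lam, hv, Nat.sub_zero, h]

lemma sum_lam_le (s : Finset V) : ∑ v ∈ s, lam G v ≤ #s * gdiam G := by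
  simpa using Finset.sum_le_sum fun v (_ : v ∈ s) => lam_le_gdiam (G := G) v

lemma sum_lam_eq_card_mul_iff (s : Finset V) :
    ∑ v ∈ s, lam G v = #s * gdiam G ↔ ∀ v ∈ s, peripheral G v := by
  rw [← smul_eq_mul, ← Finset.sum_const,
    Finset.sum_eq_sum_iff_of_le fun v _ => lam_le_gdiam v]
  exact forall₂_congr fun v _ => lam_eq_gdiam_iff v

end Eccentricity

section DiametralPath

variable [Fintype V] {x y : V} {p : G.Walk x y}

lemma IsTree.ecc_eq_max_of_mem_support (hT : G.IsTree) (hp : p.IsPath)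
    (hxy : G.dist x y = gdiam G) {v : V} (hv : v ∈ p.support) :
    ecc G v = max (G.dist x v) (G.dist v y) := by
  have hsplit := hT.dist_add_dist_of_mem_support hp hv
  refine le_antisymm (Finset.sup_le fun u _ => ?_) (max_le ?_ (dist_le_ecc v y))
  · have hxu := dist_le_gdiam (G := G) x u
    have hyu := dist_le_gdiam (G := G) y u
    have hyv : G.dist y v = G.dist v y := dist_comm
    rcases hT.dist_eq_add_or_dist_eq_add hp hv u with h | h <;> omega
  · exact dist_comm (G := G) ▸ dist_le_ecc v x

lemma IsTree.lam_eq_natAbs_of_mem_support (hT : G.IsTree) (hp : p.IsPath)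
    (hxy : G.dist x y = gdiam G) {v : V} (hv : v ∈ p.support) :
    lam G v = ((gdiam G : ℤ) - 2 * G.dist x v).natAbs := by
  have hsplit := hT.dist_add_dist_of_mem_support hp hv
  have hecc := hT.ecc_eq_max_of_mem_support hp hxy hv
  have hx := gnorm_le_dist (peripheral_of_dist_eq_gdiam (dist_comm (G := G) ▸ hxy)) v
  have hy := gnorm_le_dist (peripheral_of_dist_eq_gdiam hxy) v
  have hlow := hT.connected.gdiam_le_gnorm_add_ecc v
  have hvx : G.dist v x = G.dist x v := dist_comm
  rw [lam]
  omega

lemma IsTree.sum_lam_support [DecidableEq V] (hT : G.IsTree) (hp : p.IsPath)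
    (hxy : G.dist x y = gdiam G) :
    ∑ v ∈ p.support.toFinset, lam G v =
      ∑ i ∈ Finset.range (gdiam G + 1), ((gdiam G : ℤ) - 2 * i).natAbs := by
  rw [← hxy, ← hT.image_dist_support hp, Finset.sum_image (hT.injOn_dist_support hp), hxy]
  exact Finset.sum_congr rfl fun v hv =>
    hT.lam_eq_natAbs_of_mem_support hp hxy (List.mem_toFinset.mp hv)

lemma IsTree.lamSum_eq [DecidableEq V] (hT : G.IsTree) (hp : p.IsPath)
    (hlen : p.length = gdiam G) :
    LamSum G = ∑ v ∈ Finset.univ \ p.support.toFinset, lam G v +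
      ∑ i ∈ Finset.range (gdiam G + 1), ((gdiam G : ℤ) - 2 * i).natAbs := by
  rw [LamSum, ← Finset.sum_sdiff (Finset.subset_univ p.support.toFinset),
    hT.sum_lam_support hp (hT.length_eq_dist hp ▸ hlen)]

lemma Walk.IsPath.card_compl_support [DecidableEq V] (hp : p.IsPath) :
    #(Finset.univ \ p.support.toFinset) = Fintype.card V - p.length - 1 := by
  rw [Finset.card_sdiff_of_subset (Finset.subset_univ _), Finset.card_univ,
    List.toFinset_card_of_nodup hp.support_nodup, Walk.length_support]
  omega

lemma lamSumBound_eq [DecidableEq V] (hp : p.IsPath) (hlen : p.length = gdiam G) :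
    lamSumBound (Fintype.card V) (gdiam G) = #(Finset.univ \ p.support.toFinset) * gdiam G +
      ∑ i ∈ Finset.range (gdiam G + 1), ((gdiam G : ℤ) - 2 * i).natAbs := by
  rw [lamSumBound, hp.card_compl_support, hlen]

lemma IsTree.lamSum_le_lamSumBound (hT : G.IsTree) :
    LamSum G ≤ lamSumBound (Fintype.card V) (gdiam G) := by
  classical
  obtain ⟨x, y, p, hp, hlen⟩ := hT.connected.exists_isPath_length_eq_gdiam
  rw [hT.lamSum_eq hp hlen, lamSumBound_eq hp hlen]
  exact Nat.add_le_add_right (sum_lam_le _) _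

lemma IsTree.lamSum_eq_lamSumBound_iff (hT : G.IsTree) (hp : p.IsPath)
    (hlen : p.length = gdiam G) :
    LamSum G = lamSumBound (Fintype.card V) (gdiam G) ↔
      ∀ v, v ∉ p.support → peripheral G v := by
  classical
  rw [hT.lamSum_eq hp hlen, lamSumBound_eq hp hlen, add_left_inj, sum_lam_eq_card_mul_iff]
  simp only [Finset.mem_sdiff, Finset.mem_univ, true_and, List.mem_toFinset]

end DiametralPath

end SimpleGraph

theorem stmt_14 [Fintype V] (G : SimpleGraph V) (hT : G.IsTree) :
    LamSum G ≤ (Fintype.card V - gdiam G - 1) * gdiam G +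
      ∑ i ∈ Finset.range (gdiam G + 1), ((gdiam G : ℤ) - 2 * i).natAbs ∧
    (LamSum G = (Fintype.card V - gdiam G - 1) * gdiam G +
        ∑ i ∈ Finset.range (gdiam G + 1), ((gdiam G : ℤ) - 2 * i).natAbs ↔
      ∃ (x y : V) (p : G.Walk x y), p.IsPath ∧ p.length = gdiam G ∧
        ∀ v : V, v ∉ p.support → peripheral G v) := by
  obtain ⟨x, y, p, hp, hlen⟩ := hT.connected.exists_isPath_length_eq_gdiam
  exact ⟨hT.lamSum_le_lamSumBound,
    fun h => ⟨x, y, p, hp, hlen, (hT.lamSum_eq_lamSumBound_iff hp hlen).mp h⟩,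
    fun ⟨_, _, q, hq, hqlen, hper⟩ => (hT.lamSum_eq_lamSumBound_iff hq hqlen).mpr hper⟩
end
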